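/- Let n ≥ 1 and 0 ≤ k ≤ n. Let f be any ℤ-valued function on the k-element subsets of {1,…,2n} such that Σ_{|I|=k, J⊆I} f(I) = 0 for every subset J ⊆ {1,…,2n} with |J| < k. Then f is an integer linear combination of the functions f_m, where m ranges over the balanced partial matchings of {1,…,2n} of cardinality k. -/

import Mathlib

/-- m is a partial matching: all 2k entries of the k pairs are pairwise distinct. -/
def isMatching (n k : ℕ) (m : Fin k → Fin (2 * n) × Fin (2 * n)) : Prop :=
  Function.Injective
    (Sum.elim (fun s => (m s).1) (fun s => (m s).2) : Fin k ⊕ Fin k → Fin (2 * n))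

/-- m is balanced: in each pair, exactly one of the two entries is odd. -/
def isBalanced (n k : ℕ) (m : Fin k → Fin (2 * n) × Fin (2 * n)) : Prop :=
  ∀ s : Fin k, ((m s).1 : ℕ) % 2 ≠ ((m s).2 : ℕ) % 2

/-- The value f_m(I): the product of the signs ε_s if I contains exactly one element
from each pair of m, and 0 otherwise. -/
def fm (n k : ℕ) (m : Fin k → Fin (2 * n) × Fin (2 * n)) (I : Finset (Fin (2 * n))) : ℤ :=
  if ∀ s : Fin k, ((m s).1 ∈ I ∧ (m s).2 ∉ I) ∨ ((m s).1 ∉ I ∧ (m s).2 ∈ I) then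
    ∏ s : Fin k, (if (m s).1 ∈ I then (1 : ℤ) else -1)
  else 0

instance (n k : ℕ) (m : Fin k → Fin (2 * n) × Fin (2 * n)) : Decidable (isMatching n k m) := by
  unfold isMatching; infer_instance

instance (n k : ℕ) (m : Fin k → Fin (2 * n) × Fin (2 * n)) : Decidable (isBalanced n k m) := by
  unfold isBalanced; infer_instance

/-!
Write `f_m(I) = ∏ₛ ([iₛ ∈ I] - [jₛ ∈ I])`. Each `f_m` satisfies the relations: for `|J| < k` some
pair of `m` avoids `J`, and swapping its two entries is a sign-reversing involution on the `k`-sets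
containing `J`. Conversely, a solution `f` on the `k`-subsets of `U` is spanned by induction on `U`.
If `|U| < 2k` then `f = 0` (Möbius inversion). Otherwise, for `a ∈ U`, the derived function
`S ↦ f(S ∪ {a})` is a solution of size `k - 1` on `U \ {a}`; lifting its expansion by pairs
`(a, b)`, with `b` a point left unused, corrects `f` on the sets through `a` and leaves a solution on
`U \ {a}`. Finally each `f_m` is a combination of balanced ones: an unbalanced pair is split through
a free point of the other parity, or, if there is none, some other pair lies in the other parity
class and the two pairs are exchanged; both moves lower the number of unbalanced pairs.
-/

open Finset Function Submodule

section

variable {α : Type*} {k : ℕ}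

def matchingEntry (m : Fin k → α × α) : Fin k ⊕ Fin k → α :=
  Sum.elim (fun s => (m s).1) (fun s => (m s).2)

def IsPartialMatching (m : Fin k → α × α) : Prop :=
  Injective (matchingEntry m)

lemma mem_range_matchingEntry {m : Fin k → α × α} {x : α} :
    x ∈ Set.range (matchingEntry m) ↔ ∃ s, (m s).1 = x ∨ (m s).2 = x := by
  simp [matchingEntry, exists_or]

lemma IsPartialMatching.cons {m : Fin k → α × α} (hm : IsPartialMatching m) {a b : α}
    (hab : a ≠ b) (ha : a ∉ Set.range (matchingEntry m)) (hb : b ∉ Set.range (matchingEntry m)) :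
    IsPartialMatching (Fin.cons (a, b) m : Fin (k + 1) → α × α) := by
  simp only [mem_range_matchingEntry, not_exists, not_or] at ha hb
  simp only [IsPartialMatching, matchingEntry, Sum.elim_injective] at *
  refine ⟨?_, ?_, ?_⟩
  · intro x y hxy
    cases x using Fin.cases <;> cases y using Fin.cases <;> simp at hxy ⊢ <;> grind [hm.1.eq_iff]
  · intro x y hxy
    cases x using Fin.cases <;> cases y using Fin.cases <;> simp at hxy ⊢ <;> grind [hm.2.1.eq_iff]
  · intro x y
    cases x using Fin.cases <;> cases y using Fin.cases <;> simp <;> grind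

def matchingsIn (U : Finset α) (k : ℕ) : Set (Fin k → α × α) :=
  {m | IsPartialMatching m ∧ ∀ s, (m s).1 ∈ U ∧ (m s).2 ∈ U}

lemma matchingsIn_mono {U U' : Finset α} (h : U ⊆ U') : matchingsIn U k ⊆ matchingsIn U' k :=
  fun _ hm => ⟨hm.1, fun s => ⟨h (hm.2 s).1, h (hm.2 s).2⟩⟩

lemma notMem_range_matchingEntry {U : Finset α} {m : Fin k → α × α} (hm : m ∈ matchingsIn U k)
    {x : α} (hx : x ∉ U) : x ∉ Set.range (matchingEntry m) := by
  rintro ⟨s | s, rfl⟩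
  exacts [hx (hm.2 s).1, hx (hm.2 s).2]

lemma IsPartialMatching.of_matchingEntry_eq_update {m m' : Fin k → α × α}
    (hm : IsPartialMatching m) {x : Fin k ⊕ Fin k} {l : α} (hl : l ∉ Set.range (matchingEntry m))
    (h : matchingEntry m' = update (matchingEntry m) x l) : IsPartialMatching m' := by
  rw [IsPartialMatching, h]
  intro y z hyz
  by_cases hy : y = x <;> by_cases hz : z = x
  · rw [hy, hz]
  · rw [hy, update_self, update_of_ne hz] at hyz
    exact absurd ⟨z, hyz.symm⟩ hl
  · rw [hz, update_self, update_of_ne hy] at hyz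
    exact absurd ⟨y, hyz⟩ hl
  · rwa [update_of_ne hy, update_of_ne hz, hm.eq_iff] at hyz

lemma IsPartialMatching.update_snd {m : Fin k → α × α} (hm : IsPartialMatching m) {l : α}
    (hl : l ∉ Set.range (matchingEntry m)) (s : Fin k) :
    IsPartialMatching (update m s ((m s).1, l)) := by
  refine hm.of_matchingEntry_eq_update (x := .inr s) hl ?_
  funext x
  rcases x with u | u <;> rcases eq_or_ne u s with rfl | hu <;>
    simp [matchingEntry, update_of_ne, *]

lemma IsPartialMatching.update_fst {m : Fin k → α × α} (hm : IsPartialMatching m) {l : α}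
    (hl : l ∉ Set.range (matchingEntry m)) (s : Fin k) :
    IsPartialMatching (update m s (l, (m s).2)) := by
  refine hm.of_matchingEntry_eq_update (x := .inl s) hl ?_
  funext x
  rcases x with u | u <;> rcases eq_or_ne u s with rfl | hu <;>
    simp [matchingEntry, update_of_ne, *]

lemma IsPartialMatching.exchange {m : Fin k → α × α} (hm : IsPartialMatching m) {s t : Fin k}
    (hst : s ≠ t) :
    IsPartialMatching (update (update m s ((m s).1, (m t).1)) t ((m s).2, (m t).2)) ∧
      IsPartialMatching (update (update m s ((m s).1, (m t).2)) t ((m t).1, (m s).2)) := by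
  -- both exchanges only permute the positions of the entries
  have h₁ : matchingEntry (update (update m s ((m s).1, (m t).1)) t ((m s).2, (m t).2)) =
      matchingEntry m ∘ Equiv.swap (.inr s) (.inl t) := by
    funext x
    rcases x with u | u <;> rcases eq_or_ne u s with rfl | hus <;>
      rcases eq_or_ne u t with rfl | hut <;>
      simp_all [matchingEntry, update_of_ne, Equiv.swap_apply_of_ne_of_ne, hst.symm]
  have h₂ : matchingEntry (update (update m s ((m s).1, (m t).2)) t ((m t).1, (m s).2)) =
      matchingEntry m ∘ Equiv.swap (.inr s) (.inr t) := by
    funext x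
    rcases x with u | u <;> rcases eq_or_ne u s with rfl | hus <;>
      rcases eq_or_ne u t with rfl | hut <;>
      simp_all [matchingEntry, update_of_ne, Equiv.swap_apply_of_ne_of_ne, hst.symm]
  rw [IsPartialMatching, IsPartialMatching, h₁, h₂]
  exact ⟨hm.comp (Equiv.injective _), hm.comp (Equiv.injective _)⟩

variable [DecidableEq α]

lemma IsPartialMatching.le_card_of_forall_mem_or_mem {m : Fin k → α × α}
    (hm : IsPartialMatching m) {J : Finset α}
    (h : ∀ s, (m s).1 ∈ J ∨ (m s).2 ∈ J) : k ≤ #J := by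
  let φ : Fin k → Fin k ⊕ Fin k := fun s => if (m s).1 ∈ J then .inl s else .inr s
  have hφ : Injective φ := fun s t hst => by
    simp only [φ] at hst
    split_ifs at hst <;> simpa using hst
  calc k = #(univ : Finset (Fin k)) := by simp
    _ ≤ #J := card_le_card_of_injOn (matchingEntry m ∘ φ) (fun s _ => by
        have := h s
        simp only [comp_apply, φ]
        split_ifs <;> simp_all [matchingEntry]) (hm.comp hφ).injOn

end

section

variable (R : Type*) [CommRing R] {α : Type*} [DecidableEq α] {k : ℕ}

def pairSign (I : Finset α) (p : α × α) : R :=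
  (if p.1 ∈ I then 1 else 0) - (if p.2 ∈ I then 1 else 0)

def matchingFn (m : Fin k → α × α) (I : Finset α) : R :=
  ∏ s, pairSign R I (m s)

def nullDesigns (U : Finset α) (k : ℕ) : Submodule R (Finset α → R) where
  carrier := {f | ∀ J ⊆ U, #J < k → ∑ I ∈ (powersetCard k U).filter (J ⊆ ·), f I = 0}
  add_mem' hf hg J hJ hJk := by simp [sum_add_distrib, hf J hJ hJk, hg J hJ hJk]
  zero_mem' := by simp
  smul_mem' r f hf J hJ hJk := by simp [← mul_sum, hf J hJ hJk]

variable {R}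

lemma pairSign_eq_zero {I : Finset α} {p : α × α} (h : p.1 ∉ I ∧ p.2 ∉ I ∨ p.1 ∈ I ∧ p.2 ∈ I) :
    pairSign R I p = 0 := by
  rcases h with ⟨h1, h2⟩ | ⟨h1, h2⟩ <;> simp [pairSign, h1, h2]

lemma pairSign_map_equiv (e : α ≃ α) (I : Finset α) (p : α × α) :
    pairSign R (I.map e.toEmbedding) p = pairSign R I (e.symm p.1, e.symm p.2) := by
  simp [pairSign]

lemma matchingFn_cons (p : α × α) (m : Fin k → α × α) (I : Finset α) :
    matchingFn R (Fin.cons p m : Fin (k + 1) → α × α) I = pairSign R I p * matchingFn R m I := by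
  simp [matchingFn, Fin.prod_univ_succ]

lemma IsPartialMatching.matchingFn_eq_zero_of_card_le {m : Fin k → α × α} (hm : IsPartialMatching m)
    {I : Finset α} (hI : #I ≤ k) {b : α} (hbI : b ∈ I) (hb : b ∉ Set.range (matchingEntry m)) :
    matchingFn R m I = 0 := by
  by_contra h
  have hcover : ∀ s, (m s).1 ∈ I.erase b ∨ (m s).2 ∈ I.erase b := by
    intro s
    by_contra! hs
    obtain ⟨h1, h2⟩ : (m s).1 ∉ I ∧ (m s).2 ∉ I := by
      simp only [mem_range_matchingEntry, not_exists, not_or] at hb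
      simp_all [(hb s).1, (hb s).2]
    exact h (prod_eq_zero (mem_univ s) (pairSign_eq_zero (.inl ⟨h1, h2⟩)))
  have := hm.le_card_of_forall_mem_or_mem hcover
  rw [card_erase_of_mem hbI] at this
  have := card_pos.2 ⟨b, hbI⟩
  omega

lemma IsPartialMatching.matchingFn_map_swap {m : Fin k → α × α} (hm : IsPartialMatching m)
    (s : Fin k) (I : Finset α) :
    matchingFn R m (I.map (Equiv.swap (m s).1 (m s).2).toEmbedding) = -matchingFn R m I := by
  have hfix : ∀ t ≠ s, Equiv.swap (m s).1 (m s).2 (m t).1 = (m t).1 ∧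
      Equiv.swap (m s).1 (m s).2 (m t).2 = (m t).2 := fun t hts =>
    ⟨Equiv.swap_apply_of_ne_of_ne (hm.ne (a₁ := .inl t) (a₂ := .inl s) (by simpa using hts))
      (hm.ne (a₁ := .inl t) (a₂ := .inr s) (by simp)),
     Equiv.swap_apply_of_ne_of_ne (hm.ne (a₁ := .inr t) (a₂ := .inl s) (by simp))
      (hm.ne (a₁ := .inr t) (a₂ := .inr s) (by simpa using hts))⟩
  simp only [matchingFn, ← mul_prod_erase univ _ (mem_univ s), pairSign_map_equiv,
    Equiv.symm_swap]
  rw [prod_congr rfl fun t ht => by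
    rw [(hfix t (ne_of_mem_erase ht)).1, (hfix t (ne_of_mem_erase ht)).2]]
  simp only [Equiv.swap_apply_left, Equiv.swap_apply_right, pairSign]
  ring

theorem matchingFn_mem_nullDesigns {U : Finset α} {m : Fin k → α × α} (hm : m ∈ matchingsIn U k) :
    matchingFn R m ∈ nullDesigns R U k := by
  intro J hJU hJk
  obtain ⟨s, hs₁, hs₂⟩ : ∃ s, (m s).1 ∉ J ∧ (m s).2 ∉ J := by
    by_contra! h
    exact hJk.not_ge (hm.1.le_card_of_forall_mem_or_mem fun s => or_iff_not_imp_left.2 (h s))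
  set σ := Equiv.swap (m s).1 (m s).2
  have hσ : σ.symm = σ := Equiv.symm_swap _ _
  refine sum_involution (fun I _ => I.map σ.toEmbedding)
    (fun I _ => by rw [hm.1.matchingFn_map_swap, add_neg_cancel]) ?_ ?_
    (fun I _ => by ext; simp [hσ])
  · intro I _ hI hfixI
    refine hI (prod_eq_zero (mem_univ s) (pairSign_eq_zero ?_))
    have : (m s).2 ∈ I ↔ (m s).1 ∈ I := by
      conv_lhs => rw [← hfixI]
      simp [σ]
    tauto
  · intro I hI
    simp only [mem_filter, mem_powersetCard, card_map] at hI ⊢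
    refine ⟨⟨fun x hx => ?_, hI.1.2⟩, fun x hx => ?_⟩
    · rw [Finset.mem_map_equiv, hσ] at hx
      by_cases h₁ : x = (m s).1
      · exact h₁ ▸ (hm.2 s).1
      by_cases h₂ : x = (m s).2
      · exact h₂ ▸ (hm.2 s).2
      exact hI.1.1 (by rwa [Equiv.swap_apply_of_ne_of_ne h₁ h₂] at hx)
    · rw [Finset.mem_map_equiv, hσ, Equiv.swap_apply_of_ne_of_ne (by rintro rfl; exact hs₁ hx)
        (by rintro rfl; exact hs₂ hx)]
      exact hI.2 hx

theorem span_matchingFn_le_nullDesigns (U : Finset α) (k : ℕ) :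
    span R (matchingFn R '' matchingsIn U k) ≤ nullDesigns R U k :=
  span_le.2 <| by
    rintro _ ⟨m, hm, rfl⟩
    exact matchingFn_mem_nullDesigns hm

/-- Möbius inversion over the subsets `J ⊆ I` recovers `(-1)^k f(I)` from the vanishing sums,
and also expresses it through the `k`-sets disjoint from `I`, of which there are none. -/
theorem eq_zero_of_mem_nullDesigns_of_card_lt {U : Finset α} {f : Finset α → R}
    (hf : f ∈ nullDesigns R U k) (hU : #U < 2 * k) {I : Finset α} (hI : I ∈ powersetCard k U) :
    f I = 0 := by
  rw [mem_powersetCard] at hI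
  have hsingle : ∑ J ∈ I.powerset, (-1 : R) ^ #J *
      ∑ I' ∈ (powersetCard k U).filter (J ⊆ ·), f I' = (-1) ^ k * f I := by
    rw [sum_eq_single_of_mem I (mem_powerset_self I)]
    · have : (powersetCard k U).filter (I ⊆ ·) = {I} := by
        ext I'
        simp only [mem_filter, mem_powersetCard, mem_singleton]
        refine ⟨fun h => (eq_of_subset_of_card_le h.2 (by omega)).symm, ?_⟩
        rintro rfl
        exact ⟨hI, subset_rfl⟩
      rw [this, sum_singleton, hI.2]
    · intro J hJ hJI
      have hJk : #J < k := hI.2 ▸ card_lt_card (ssubset_of_subset_of_ne (mem_powerset.1 hJ) hJI)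
      rw [hf J ((mem_powerset.1 hJ).trans hI.1) hJk, mul_zero]
  have hzero : ∑ J ∈ I.powerset, (-1 : R) ^ #J *
      ∑ I' ∈ (powersetCard k U).filter (J ⊆ ·), f I' = 0 := by
    simp_rw [mul_sum]
    rw [sum_comm' (t' := powersetCard k U) (s' := fun I' => (I ∩ I').powerset)
      (fun J I' => by simp only [mem_filter, mem_powerset, subset_inter_iff]; tauto)]
    refine sum_eq_zero fun I' hI' => ?_
    rw [mem_powersetCard] at hI'
    have hmeet : (I ∩ I').Nonempty := by
      rw [← not_disjoint_iff_nonempty_inter]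
      intro hdisj
      have := card_le_card (union_subset hI.1 hI'.1)
      rw [card_union_of_disjoint hdisj] at this
      omega
    have := congrArg (Int.cast : ℤ → R) (sum_powerset_neg_one_pow_card_of_nonempty hmeet)
    push_cast at this
    rw [← sum_mul, this, zero_mul]
  have hunit : IsUnit ((-1 : R) ^ k) := isUnit_one.neg.pow k
  rwa [hsingle, hunit.mul_right_eq_zero] at hzero

lemma matchingFn_erase {m : Fin k → α × α} {a : α} (ha : a ∉ Set.range (matchingEntry m))
    (I : Finset α) : matchingFn R m (I.erase a) = matchingFn R m I := by
  simp only [mem_range_matchingEntry, not_exists, not_or] at ha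
  refine prod_congr rfl fun s _ => ?_
  simp [pairSign, (ha s).1, (ha s).2]

theorem exists_mem_span_matchingFn_eqOn_zero (U : Finset α) (f : Finset α → R) :
    ∃ g ∈ span R (matchingFn R '' matchingsIn U 0), Set.EqOn f g (powersetCard 0 U) := by
  refine ⟨f ∅ • matchingFn R (Fin.elim0 : Fin 0 → α × α),
    smul_mem _ _ (subset_span ⟨_, ⟨fun x => isEmptyElim x, fun s => s.elim0⟩, rfl⟩), fun I hI => ?_⟩
  rw [powersetCard_zero, coe_singleton, Set.mem_singleton_iff] at hI
  simp [hI, matchingFn]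

theorem derived_mem_nullDesigns {a : α} {V : Finset α} (ha : a ∉ V) {f : Finset α → R}
    (hf : f ∈ nullDesigns R (insert a V) (k + 1)) :
    (fun S => f (insert a S)) ∈ nullDesigns R V k := by
  intro J hJ hJk
  have haJ : a ∉ J := fun h => ha (hJ h)
  rw [← hf (insert a J) (insert_subset_insert a hJ) (by rw [card_insert_of_notMem haJ]; omega)]
  refine sum_nbij' (insert a) (·.erase a) ?_ ?_ ?_ ?_ fun _ _ => rfl
  · intro S hS
    simp only [mem_filter, mem_powersetCard] at hS ⊢
    have haS : a ∉ S := fun h => ha (hS.1.1 h)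
    exact ⟨⟨insert_subset_insert a hS.1.1, by rw [card_insert_of_notMem haS, hS.1.2]⟩,
      insert_subset_insert a hS.2⟩
  · intro I hI
    simp only [mem_filter, mem_powersetCard, insert_subset_iff] at hI ⊢
    exact ⟨⟨subset_insert_iff.1 hI.1.1,
      by rw [card_erase_of_mem hI.2.1, hI.1.2, Nat.add_sub_cancel]⟩,
      subset_erase.2 ⟨hI.2.2, haJ⟩⟩
  · intro S hS
    simp only [mem_filter, mem_powersetCard] at hS
    exact erase_insert fun h => ha (hS.1.1 h)
  · intro I hI
    simp only [mem_filter, mem_powersetCard, insert_subset_iff] at hI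
    exact insert_erase hI.2.1

theorem mem_nullDesigns_of_insert {a : α} {V : Finset α} {f : Finset α → R}
    (hf : f ∈ nullDesigns R (insert a V) k)
    (hfa : ∀ I ∈ powersetCard k (insert a V), a ∈ I → f I = 0) : f ∈ nullDesigns R V k := by
  intro J hJ hJk
  rw [← hf J (hJ.trans (subset_insert a V)) hJk]
  refine sum_subset (filter_subset_filter _ (powersetCard_mono (subset_insert a V)))
    fun I hI hIV => hfa I (mem_filter.1 hI).1 ?_
  simp only [mem_filter, mem_powersetCard] at hI hIV
  by_contra haI
  exact hIV ⟨⟨(subset_insert_iff_of_notMem haI).1 hI.1.1, hI.1.2⟩, hI.2⟩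

theorem eq_zero_of_mem_span_matchingFn {V : Finset α} {g : Finset α → R}
    (hg : g ∈ span R (matchingFn R '' matchingsIn V k)) {I : Finset α} (hI : #I = k)
    (hIV : ¬I ⊆ V) : g I = 0 := by
  obtain ⟨b, hbI, hbV⟩ := not_subset.1 hIV
  induction hg using span_induction with
  | mem _ h =>
    obtain ⟨m, hm, rfl⟩ := h
    exact hm.1.matchingFn_eq_zero_of_card_le hI.le hbI (notMem_range_matchingEntry hm hbV)
  | zero => rfl
  | add _ _ _ _ h₁ h₂ => simp [h₁, h₂]
  | smul r _ _ h => simp [h]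

theorem exists_cons_mem_matchingsIn {a : α} {V : Finset α} (ha : a ∉ V) (hV : 2 * k < #V)
    {m : Fin k → α × α} (hm : m ∈ matchingsIn V k) :
    ∃ b, (Fin.cons (a, b) m : Fin (k + 1) → α × α) ∈ matchingsIn (insert a V) (k + 1) ∧
      ∀ I : Finset α, #I = k + 1 → a ∈ I →
        matchingFn R (Fin.cons (a, b) m : Fin (k + 1) → α × α) I = matchingFn R m (I.erase a) := by
  have hentries : #(univ.image (matchingEntry m)) < #V :=
    card_image_le.trans_lt (by simpa [two_mul] using hV)
  obtain ⟨b, hbV, hbm⟩ := exists_mem_notMem_of_card_lt_card hentries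
  have hb : b ∉ Set.range (matchingEntry m) := by
    rintro ⟨x, rfl⟩
    exact hbm (mem_image_of_mem _ (mem_univ x))
  have ha' := notMem_range_matchingEntry hm ha
  refine ⟨b, ⟨hm.1.cons (by rintro rfl; exact ha hbV) ha' hb, fun s => ?_⟩, fun I hI haI => ?_⟩
  · cases s using Fin.cases
    · simp [hbV]
    · simp [(hm.2 _).1, (hm.2 _).2]
  · rw [matchingFn_cons, matchingFn_erase ha']
    by_cases hbI : b ∈ I
    · have hbI' : b ∈ I.erase a := mem_erase.2 ⟨by rintro rfl; exact ha hbV, hbI⟩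
      rw [← matchingFn_erase ha',
        hm.1.matchingFn_eq_zero_of_card_le (by simp [card_erase_of_mem haI, hI]) hbI' hb, mul_zero]
    · simp [pairSign, haI, hbI]

theorem exists_lift_of_mem_span_matchingFn {a : α} {V : Finset α} (ha : a ∉ V) (hV : 2 * k < #V)
    {g : Finset α → R} (hg : g ∈ span R (matchingFn R '' matchingsIn V k)) :
    ∃ G ∈ span R (matchingFn R '' matchingsIn (insert a V) (k + 1)),
      ∀ I : Finset α, #I = k + 1 → a ∈ I → G I = g (I.erase a) := by
  induction hg using span_induction with
  | mem _ h =>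
    obtain ⟨m, hm, rfl⟩ := h
    obtain ⟨b, hmb, hval⟩ := exists_cons_mem_matchingsIn (R := R) ha hV hm
    exact ⟨_, subset_span ⟨_, hmb, rfl⟩, hval⟩
  | zero => exact ⟨0, zero_mem _, fun _ _ _ => rfl⟩
  | add _ _ _ _ h₁ h₂ =>
    obtain ⟨G₁, hG₁, h₁⟩ := h₁
    obtain ⟨G₂, hG₂, h₂⟩ := h₂
    exact ⟨G₁ + G₂, add_mem hG₁ hG₂, fun I hI haI => by simp [h₁ I hI haI, h₂ I hI haI]⟩
  | smul r _ _ h =>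
    obtain ⟨G, hG, h⟩ := h
    exact ⟨r • G, smul_mem _ r hG, fun I hI haI => by simp [h I hI haI]⟩

theorem exists_mem_span_matchingFn_eqOn_insert {a : α} {V : Finset α} (ha : a ∉ V)
    (hV : 2 * k < #V)
    (ih : ∀ (j : ℕ) (f : Finset α → R), f ∈ nullDesigns R V j →
      ∃ g ∈ span R (matchingFn R '' matchingsIn V j), Set.EqOn f g (powersetCard j V))
    {f : Finset α → R} (hf : f ∈ nullDesigns R (insert a V) (k + 1)) :
    ∃ g ∈ span R (matchingFn R '' matchingsIn (insert a V) (k + 1)),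
      Set.EqOn f g (powersetCard (k + 1) (insert a V)) := by
  obtain ⟨g, hg, hfg⟩ := ih k _ (derived_mem_nullDesigns ha hf)
  obtain ⟨G, hG, hGg⟩ := exists_lift_of_mem_span_matchingFn ha hV hg
  have hvanish : ∀ I ∈ powersetCard (k + 1) (insert a V), a ∈ I → (f - G) I = 0 := by
    intro I hI haI
    rw [mem_powersetCard] at hI
    have hIa : I.erase a ∈ powersetCard k V := mem_powersetCard.2
      ⟨subset_insert_iff.1 hI.1, by rw [card_erase_of_mem haI, hI.2, Nat.add_sub_cancel]⟩
    have := hfg hIa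
    simp only [insert_erase haI] at this
    rw [Pi.sub_apply, this, hGg I hI.2 haI, sub_self]
  have hres : f - G ∈ nullDesigns R V (k + 1) :=
    mem_nullDesigns_of_insert (sub_mem hf (span_matchingFn_le_nullDesigns _ _ hG)) hvanish
  obtain ⟨H, hH, hfGH⟩ := ih (k + 1) _ hres
  refine ⟨G + H, add_mem hG (span_mono (Set.image_mono (matchingsIn_mono (subset_insert a V))) hH),
    fun I hI => ?_⟩
  rw [mem_coe] at hI
  by_cases haI : a ∈ I
  · have hHI : H I = 0 :=
      eq_zero_of_mem_span_matchingFn hH (mem_powersetCard.1 hI).2 fun h => ha (h haI)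
    have := hvanish I hI haI
    simp only [Pi.sub_apply, sub_eq_zero] at this
    simp [this, hHI]
  · have hIV : I ∈ powersetCard (k + 1) V := by
      rw [mem_powersetCard] at hI ⊢
      exact ⟨(subset_insert_iff_of_notMem haI).1 hI.1, hI.2⟩
    have := hfGH hIV
    simp only [Pi.sub_apply, sub_eq_iff_eq_add] at this
    simp [this, add_comm]

theorem exists_mem_span_matchingFn_eqOn (U : Finset α) (k : ℕ) {f : Finset α → R}
    (hf : f ∈ nullDesigns R U k) :
    ∃ g ∈ span R (matchingFn R '' matchingsIn U k), Set.EqOn f g (powersetCard k U) := by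
  induction U using Finset.induction_on generalizing k f with
  | empty =>
    rcases k with _ | k
    · exact exists_mem_span_matchingFn_eqOn_zero _ f
    · exact ⟨0, zero_mem _, fun I hI => eq_zero_of_mem_nullDesigns_of_card_lt hf (by simp) hI⟩
  | insert a V ha ih =>
    rcases k with _ | k
    · exact exists_mem_span_matchingFn_eqOn_zero _ f
    by_cases hV : 2 * k < #V
    · exact exists_mem_span_matchingFn_eqOn_insert ha hV (fun j f hf => ih j hf) hf
    · exact ⟨0, zero_mem _, fun I hI => eq_zero_of_mem_nullDesigns_of_card_lt hf
        (by rw [card_insert_of_notMem ha]; omega) hI⟩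

lemma matchingFn_update (m : Fin k → α × α) (s : Fin k) (p : α × α) (I : Finset α) :
    matchingFn R (update m s p) I = pairSign R I p * ∏ u ∈ univ.erase s, pairSign R I (m u) := by
  rw [matchingFn, ← mul_prod_erase _ _ (mem_univ s), update_self]
  congr 1
  exact prod_congr rfl fun u hu => by rw [update_of_ne (ne_of_mem_erase hu)]

lemma matchingFn_update_update (m : Fin k → α × α) {s t : Fin k} (hst : s ≠ t) (p q : α × α)
    (I : Finset α) :
    matchingFn R (update (update m s p) t q) I =
      pairSign R I p * pairSign R I q * ∏ u ∈ (univ.erase t).erase s, pairSign R I (m u) := by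
  rw [matchingFn_update, ← mul_prod_erase _ _ (mem_erase.2 ⟨hst, mem_univ s⟩), update_self]
  rw [prod_congr rfl fun u hu => by rw [update_of_ne (ne_of_mem_erase hu)]]
  ring

/-- `[i] - [j] = ([i] - [l]) + ([l] - [j])` in the pair `s = (i, j)`. -/
lemma matchingFn_eq_add_split (m : Fin k → α × α) (s : Fin k) (l : α) :
    matchingFn R m =
      matchingFn R (update m s ((m s).1, l)) + matchingFn R (update m s (l, (m s).2)) := by
  funext I
  rw [Pi.add_apply, matchingFn_update, matchingFn_update, matchingFn,
    ← mul_prod_erase _ _ (mem_univ s)]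
  simp only [pairSign]
  ring

/-- `([i] - [j]) ([i'] - [j']) = ([i] - [i']) ([j] - [j']) + ([i] - [j']) ([i'] - [j])` for the
pairs `s = (i, j)` and `t = (i', j')`. -/
lemma matchingFn_eq_add_exchange (m : Fin k → α × α) {s t : Fin k} (hst : s ≠ t) :
    matchingFn R m =
      matchingFn R (update (update m s ((m s).1, (m t).1)) t ((m s).2, (m t).2)) +
        matchingFn R (update (update m s ((m s).1, (m t).2)) t ((m t).1, (m s).2)) := by
  funext I
  have h := matchingFn_update_update (R := R) m hst (m s) (m t) I
  simp only [update_eq_self] at h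
  rw [Pi.add_apply, h, matchingFn_update_update _ hst, matchingFn_update_update _ hst]
  simp only [pairSign]
  ring

end

section

variable {R : Type*} [CommRing R] {α β : Type*} [DecidableEq β] {k : ℕ}

def monoPairs (c : α → β) (m : Fin k → α × α) : Finset (Fin k) :=
  {s | c (m s).1 = c (m s).2}

lemma monoPairs_update_subset (c : α → β) (m : Fin k → α × α) (s : Fin k) {p : α × α}
    (hp : c p.1 ≠ c p.2) : monoPairs c (update m s p) ⊆ (monoPairs c m).erase s := by
  intro u hu
  simp only [monoPairs, mem_filter, mem_univ, true_and, mem_erase] at hu ⊢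
  rcases eq_or_ne u s with rfl | hus
  · rw [update_self] at hu
    exact absurd hu hp
  · rw [update_of_ne hus] at hu
    exact ⟨hus, hu⟩

lemma monoPairs_update_ssubset (c : α → β) {m : Fin k → α × α} {s : Fin k}
    (hs : s ∈ monoPairs c m) {p : α × α} (hp : c p.1 ≠ c p.2) :
    monoPairs c (update m s p) ⊂ monoPairs c m :=
  (monoPairs_update_subset c m s hp).trans_ssubset (erase_ssubset hs)

lemma monoPairs_update_update_ssubset (c : α → β) {m : Fin k → α × α} {s : Fin k}
    (hs : s ∈ monoPairs c m) (t : Fin k) {p q : α × α} (hp : c p.1 ≠ c p.2)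
    (hq : c q.1 ≠ c q.2) : monoPairs c (update (update m s p) t q) ⊂ monoPairs c m :=
  ((monoPairs_update_subset c _ t hq).trans (erase_subset _ _)).trans_ssubset
    (monoPairs_update_ssubset c hs hp)

/-- Otherwise each of the `k - 1` pairs other than `s` would cover at most one point of `C`. -/
lemma exists_pair_subset_of_card_le [DecidableEq α] {m : Fin k → α × α} {C : Finset α} {s : Fin k}
    (hs : (m s).1 ∉ C ∧ (m s).2 ∉ C) (hC : ∀ x ∈ C, x ∈ Set.range (matchingEntry m))
    (hk : k ≤ #C) : ∃ t, (m t).1 ∈ C ∧ (m t).2 ∈ C := by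
  by_contra! h
  let φ : Fin k → α := fun t => if (m t).1 ∈ C then (m t).1 else (m t).2
  have hcover : C ⊆ (univ.erase s).image φ := by
    intro x hx
    obtain ⟨t | t, rfl⟩ := hC x hx
    · refine mem_image.2 ⟨t, mem_erase.2 ⟨?_, mem_univ t⟩, if_pos hx⟩
      rintro rfl
      exact hs.1 hx
    · refine mem_image.2 ⟨t, mem_erase.2 ⟨?_, mem_univ t⟩, if_neg fun h₁ => h t h₁ hx⟩
      rintro rfl
      exact hs.2 hx
  have := (card_le_card hcover).trans card_image_le
  rw [card_erase_of_mem (mem_univ s), card_univ, Fintype.card_fin] at this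
  have := s.pos
  omega

def bichromaticMatchings (c : α → β) (k : ℕ) : Set (Fin k → α × α) :=
  {m | IsPartialMatching m ∧ ∀ s, c (m s).1 ≠ c (m s).2}

variable [DecidableEq α] [Fintype α]

theorem matchingFn_mem_span_bichromatic (c : α → β) (hc : ∀ γ, ∃ γ' ≠ γ, k ≤ #{x | c x = γ'})
    {m : Fin k → α × α} (hm : IsPartialMatching m) :
    matchingFn R m ∈ span R (matchingFn R '' bichromaticMatchings c k) := by
  induction hN : #(monoPairs c m) using Nat.strong_induction_on generalizing m with
  | _ N ih =>
    have ih' : ∀ m', IsPartialMatching m' → monoPairs c m' ⊂ monoPairs c m →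
        matchingFn R m' ∈ span R (matchingFn R '' bichromaticMatchings c k) :=
      fun m' hm' hlt => ih _ (hN ▸ card_lt_card hlt) hm' rfl
    obtain hempty | ⟨s, hs⟩ := (monoPairs c m).eq_empty_or_nonempty
    · refine subset_span ⟨m, ⟨hm, fun s hs => ?_⟩, rfl⟩
      exact eq_empty_iff_forall_notMem.1 hempty s (by simpa [monoPairs] using hs)
    have hs' : c (m s).1 = c (m s).2 := by simpa [monoPairs] using hs
    obtain ⟨γ, hγ, hk⟩ := hc (c (m s).1)
    have hγ' : γ ≠ c (m s).2 := hs' ▸ hγ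
    by_cases hfree : ∃ l, c l = γ ∧ l ∉ Set.range (matchingEntry m)
    · obtain ⟨l, hl, hlm⟩ := hfree
      rw [matchingFn_eq_add_split m s l]
      exact add_mem
        (ih' _ (hm.update_snd hlm s) (monoPairs_update_ssubset c hs (by simp [hl, hγ.symm])))
        (ih' _ (hm.update_fst hlm s) (monoPairs_update_ssubset c hs (by simp [hl, hγ'])))
    push Not at hfree
    obtain ⟨t, ht₁, ht₂⟩ := exists_pair_subset_of_card_le (C := {x | c x = γ}) (s := s)
      (by simp [hγ.symm, ← hs']) (fun x hx => hfree x (by simpa using hx)) hk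
    simp only [mem_filter, mem_univ, true_and] at ht₁ ht₂
    have hst : s ≠ t := by
      rintro rfl
      exact hγ (ht₁.symm)
    rw [matchingFn_eq_add_exchange m hst]
    exact add_mem
      (ih' _ (hm.exchange hst).1 (monoPairs_update_update_ssubset c hs t (by simp [ht₁, hγ.symm])
        (by simp [ht₂, hγ'.symm])))
      (ih' _ (hm.exchange hst).2 (monoPairs_update_update_ssubset c hs t (by simp [ht₂, hγ.symm])
        (by simp [ht₁, hγ'])))

theorem span_matchingFn_le_span_bichromatic (c : α → β) (hc : ∀ γ, ∃ γ' ≠ γ, k ≤ #{x | c x = γ'})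
    (U : Finset α) :
    span R (matchingFn R '' matchingsIn U k) ≤ span R (matchingFn R '' bichromaticMatchings c k) :=
  span_le.2 <| by
    rintro _ ⟨m, hm, rfl⟩
    exact matchingFn_mem_span_bichromatic c hc hm.1

end

lemma fm_eq_matchingFn (n k : ℕ) (m : Fin k → Fin (2 * n) × Fin (2 * n)) :
    fm n k m = matchingFn ℤ m := by
  funext I
  unfold fm matchingFn
  split_ifs with h
  · refine prod_congr rfl fun s _ => ?_
    rcases h s with ⟨h₁, h₂⟩ | ⟨h₁, h₂⟩ <;> simp [pairSign, h₁, h₂]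
  · push Not at h
    obtain ⟨s, hs₁, hs₂⟩ := h
    exact (prod_eq_zero (mem_univ s) (pairSign_eq_zero (by tauto))).symm

lemma le_card_filter_mod_two (n r : ℕ) (hr : r < 2) :
    n ≤ #{x : Fin (2 * n) | (x : ℕ) % 2 = r} := by
  calc n = #(univ : Finset (Fin n)) := by simp
    _ ≤ _ := card_le_card_of_injOn (fun i : Fin n => (⟨2 * i + r, by omega⟩ : Fin (2 * n)))
        (fun i _ => by simp; omega)
        fun i _ j _ h => Fin.ext (by simp only [Fin.mk.injEq] at h; omega)

theorem stmt6_general (n k : ℕ) (hk : k ≤ n) (f : Finset (Fin (2 * n)) → ℤ)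
    (hf : ∀ J : Finset (Fin (2 * n)), J.card < k →
      ∑ I ∈ (Finset.powersetCard k (Finset.univ : Finset (Fin (2 * n)))).filter
          (fun I => J ⊆ I), f I = 0) :
    ∃ c : (Fin k → Fin (2 * n) × Fin (2 * n)) → ℤ,
      ∀ I : Finset (Fin (2 * n)), I.card = k →
        f I =
          ∑ m ∈ Finset.univ.filter
              (fun m : Fin k → Fin (2 * n) × Fin (2 * n) =>
                isMatching n k m ∧ isBalanced n k m),
            c m * fm n k m I := by
  set S : Finset (Fin k → Fin (2 * n) × Fin (2 * n)) :=
    univ.filter fun m => isMatching n k m ∧ isBalanced n k m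
  have hS : (S : Set _) = bichromaticMatchings (fun x : Fin (2 * n) => (x : ℕ) % 2) k := by
    ext m
    simp [S, bichromaticMatchings, isMatching, isBalanced, IsPartialMatching, matchingEntry]
  have hparity (γ : ℕ) : ∃ γ' ≠ γ, k ≤ #{x : Fin (2 * n) | (x : ℕ) % 2 = γ'} :=
    ⟨if γ = 0 then 1 else 0, by split_ifs <;> omega,
      hk.trans (le_card_filter_mod_two n _ (by split_ifs <;> omega))⟩
  obtain ⟨g, hg, hfg⟩ := exists_mem_span_matchingFn_eqOn univ k (f := f) fun J _ => hf J
  have hbal : g ∈ span ℤ (matchingFn ℤ '' (S : Set (Fin k → Fin (2 * n) × Fin (2 * n)))) := by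
    rw [hS]
    exact span_matchingFn_le_span_bichromatic _ hparity univ hg
  obtain ⟨l, hl, rfl⟩ := (Finsupp.mem_span_image_iff_linearCombination ℤ).1 hbal
  refine ⟨l, fun I hI => ?_⟩
  rw [hfg (mem_powersetCard.2 ⟨subset_univ I, hI⟩),
    Finsupp.linearCombination_apply_of_mem_supported ℤ hl]
  simp [fm_eq_matchingFn]

/-- Any ℤ-valued function f on the k-element subsets of {1,…,2n}
satisfying the relations Σ_{|I|=k, J⊆I} f(I) = 0 for all |J| < k is an integer linear
combination of the f_m over balanced partial matchings m of cardinality k. -/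
theorem stmt6 (n k : ℕ) (hn : 1 ≤ n) (hk : k ≤ n) (f : Finset (Fin (2 * n)) → ℤ)
    (hf : ∀ J : Finset (Fin (2 * n)), J.card < k →
      ∑ I ∈ (Finset.powersetCard k (Finset.univ : Finset (Fin (2 * n)))).filter
          (fun I => J ⊆ I), f I = 0) :
    ∃ c : (Fin k → Fin (2 * n) × Fin (2 * n)) → ℤ,
      ∀ I : Finset (Fin (2 * n)), I.card = k →
        f I =
          ∑ m ∈ Finset.univ.filter
              (fun m : Fin k → Fin (2 * n) × Fin (2 * n) =>
                isMatching n k m ∧ isBalanced n k m),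
            c m * fm n k m I :=
  stmt6_general n k hk f hf
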